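/- Let n ≥ 2, let η be a planar equivalence on {1,…,n}, and let 1 ≤ i < j ≤ n. Let p be the maximum of the ker(d_η)-class of i and q the minimum of the ker(d_η)-class of j (i.e. p = max A_k and q = min A_l where A_k, A_l are the intervals [min B, max B] over un-nested η-classes B containing i and j respectively), and set μ = η ∨ η_pq. Then: (1) μ is a planar equivalence, and h̄_ij d_η = d_μ; (2) if μ ≠ η, then suc_μ(p) = q and suc_μ(x) = suc_η(x) for all x ≠ p, where suc_η(x) denotes the least element of the η-class of x that is greater than x, or x itself if x is the maximum of its class. -/
import Mathlib


open scoped Classical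

namespace PaperFDP

/-- Vertex set of a partition diagram: `inl x` is the upper vertex `x`,
`inr x` is the lower vertex `x'`. -/
abbrev V (n : ℕ) := Fin n ⊕ Fin n

/-- A partition in `P_n`: a set partition of the `2n` points, encoded as an
equivalence relation (a `Setoid`). -/
abbrev Ptn (n : ℕ) := Setoid (V n)

/-- Three-row vertex set (upper ⊕ (middle ⊕ lower)) used for the product graph. -/
abbrev W3 (n : ℕ) := Fin n ⊕ (Fin n ⊕ Fin n)

/-- Embedding of `a`'s vertices: upper row stays, lower row goes to the middle row. -/
def upMid {n : ℕ} : V n → W3 n :=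
  Sum.elim Sum.inl fun x => Sum.inr (Sum.inl x)

/-- Embedding of `b`'s vertices: upper row goes to the middle row, lower row stays. -/
def midLow {n : ℕ} : V n → W3 n :=
  Sum.elim (fun x => Sum.inr (Sum.inl x)) fun x => Sum.inr (Sum.inr x)

/-- Embedding of the outer (upper and lower) rows into the three-row vertex set. -/
def outer {n : ℕ} : V n → W3 n :=
  Sum.elim Sum.inl fun x => Sum.inr (Sum.inr x)

/-- The edge relation of the product graph `Π(a,b)`. -/
def joinRel {n : ℕ} (a b : Ptn n) (u v : W3 n) : Prop :=
  (∃ p q : V n, a.r p q ∧ upMid p = u ∧ upMid q = v) ∨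
  (∃ p q : V n, b.r p q ∧ midLow p = u ∧ midLow q = v)

/-- The product of two partitions: `x,y` lie in the same block of `a*b` iff they are
connected in the product graph. -/
def pmul {n : ℕ} (a b : Ptn n) : Ptn n :=
  Setoid.comap outer (Relation.EqvGen.setoid (joinRel a b))

/-- The identity partition, with blocks `{x, x'}`. -/
def onePtn (n : ℕ) : Ptn n := Setoid.ker (Sum.elim id id)

/-- The partition of a transformation `f` (written on the right): `x` is joined to `(x f)'`. -/
def toPtn {n : ℕ} (f : Fin n → Fin n) : Ptn n := Setoid.ker (Sum.elim f id)

/-- `id_ε`, the partition with blocks `A ∪ A'` for the `ε`-classes `A`. -/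
def idOf {n : ℕ} (ε : Setoid (Fin n)) : Ptn n := Setoid.comap (Sum.elim id id) ε

/-- The kernel of a partition. -/
def kerP {n : ℕ} (a : Ptn n) : Setoid (Fin n) := Setoid.comap Sum.inl a

/-- The cokernel of a partition. -/
def cokerP {n : ℕ} (a : Ptn n) : Setoid (Fin n) := Setoid.comap Sum.inr a

/-- `a` has full domain: every upper point is in a block meeting the lower row. -/
def FullDom {n : ℕ} (a : Ptn n) : Prop :=
  ∀ x : Fin n, ∃ y : Fin n, a.r (Sum.inl x) (Sum.inr y)

/-- The full-domain partition monoid `P_n^fd` as a subset of `P_n`. -/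
def Pfd (n : ℕ) : Set (Ptn n) := {a | FullDom a}

/-- `a` is (the partition of) a permutation, i.e. a unit of `P_n`. -/
def IsPermPtn {n : ℕ} (a : Ptn n) : Prop := ∃ g : Equiv.Perm (Fin n), a = toPtn ⇑g

/-- The singular ideal `Sing(P_n^fd) = P_n^fd ∖ S_n`. -/
def SingPfd (n : ℕ) : Set (Ptn n) := {a | FullDom a ∧ ¬ IsPermPtn a}

/-- The boundary linear order on the `2n` vertices: `1 < … < n < n' < … < 1'`. -/
def ordV {n : ℕ} : V n → ℕ :=
  Sum.elim (fun x => (x : ℕ)) fun x => 2 * n - 1 - (x : ℕ)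

/-- `a` is planar: it can be drawn without crossings, equivalently it is
non-crossing with respect to the boundary order on the `2n` vertices. -/
def Planar {n : ℕ} (a : Ptn n) : Prop :=
  ∀ p q r s : V n, ordV p < ordV q → ordV q < ordV r → ordV r < ordV s →
    a.r p r → a.r q s → a.r p q

/-- The planar full-domain partition monoid `PP_n^fd` as a subset of `P_n`. -/
def PPfd (n : ℕ) : Set (Ptn n) := {a | FullDom a ∧ Planar a}

/-- `η_ij`: the equivalence on `{1,…,n}` whose only nontrivial class is `{i,j}`. -/
def etaOf {n : ℕ} (i j : Fin n) : Setoid (Fin n) :=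
  Setoid.ker fun x => if x = j then i else x

/-- `ē_ij = id_{η_ij}`: the partition with block `{i,j,i',j'}` and blocks `{x,x'}` otherwise. -/
def ebar {n : ℕ} (i j : Fin n) : Ptn n := idOf (etaOf i j)

/-- `t̄_ij`: the transformation sending `j ↦ i` and fixing everything else, as a partition. -/
def tbar {n : ℕ} (i j : Fin n) : Ptn n := toPtn fun x => if x = j then i else x

/-- Evaluation of a word as a genuine (semi)group product of partitions
(the empty word evaluates to the identity partition). -/
def evalWith {A : Type*} {n : ℕ} (g : A → Ptn n) : List A → Ptn n
  | [] => onePtn n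
  | [x] => g x
  | x :: y :: w => pmul (g x) (evalWith g (y :: w))

/-- One-step rewriting using a relation from `R`, in an arbitrary context. -/
def OneStep {A : Type*} (R : List A → List A → Prop) (w w' : List A) : Prop :=
  ∃ u v p q : List A, R p q ∧ w = u ++ p ++ v ∧ w' = u ++ q ++ v

/-- The congruence on the free monoid (or free semigroup) generated by `R`. -/
def PresCong {A : Type*} (R : List A → List A → Prop) : List A → List A → Prop :=
  Relation.EqvGen (OneStep R)

end PaperFDP

namespace PaperFDP

/-- The `ε`-class of `x`, as a set. -/
def clsS {n : ℕ} (ε : Setoid (Fin n)) (x : Fin n) : Set (Fin n) := {y | ε.r x y}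

/-- Two sets are separated if one lies entirely below the other. -/
def SepSets {n : ℕ} (A B : Set (Fin n)) : Prop :=
  (∀ a ∈ A, ∀ b ∈ B, a < b) ∨ (∀ a ∈ A, ∀ b ∈ B, b < a)

/-- `A` is nested by `B`: all of `A` lies strictly between two consecutive elements of `B`. -/
def NestedBy {n : ℕ} (A B : Set (Fin n)) : Prop :=
  ∃ b₁ ∈ B, ∃ b₂ ∈ B, b₁ < b₂ ∧ (∀ b ∈ B, ¬ (b₁ < b ∧ b < b₂)) ∧
    ∀ a ∈ A, b₁ < a ∧ a < b₂

/-- An equivalence is planar if any two of its classes are nested or separated. -/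
def IsPlanarEq {n : ℕ} (ε : Setoid (Fin n)) : Prop :=
  ∀ x y : Fin n, ¬ ε.r x y →
    SepSets (clsS ε x) (clsS ε y) ∨ NestedBy (clsS ε x) (clsS ε y) ∨
      NestedBy (clsS ε y) (clsS ε x)

/-- The class of `x` is un-nested (nested by no other class). -/
def Unnested {n : ℕ} (ε : Setoid (Fin n)) (x : Fin n) : Prop :=
  ∀ y : Fin n, ¬ NestedBy (clsS ε x) (clsS ε y)

/-- The minimum of the `ε`-class of `x`. -/
noncomputable def minCl {n : ℕ} (ε : Setoid (Fin n)) (x : Fin n) : Fin n :=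
  (Finset.univ.filter fun y => ε.r x y).min'
    ⟨x, Finset.mem_filter.mpr ⟨Finset.mem_univ x, ε.iseqv.refl x⟩⟩

/-- The maximum of the `ε`-class of `x`. -/
noncomputable def maxCl {n : ℕ} (ε : Setoid (Fin n)) (x : Fin n) : Fin n :=
  (Finset.univ.filter fun y => ε.r x y).max'
    ⟨x, Finset.mem_filter.mpr ⟨Finset.mem_univ x, ε.iseqv.refl x⟩⟩

/-- The minima of the un-nested `ε`-classes. -/
noncomputable def anchorsF {n : ℕ} (ε : Setoid (Fin n)) : Finset (Fin n) :=
  Finset.univ.filter fun y => Unnested ε y ∧ minCl ε y = y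

/-- The largest minimum-of-an-un-nested-class that is `≤ x`.  (For a planar
equivalence this always exists; junk default otherwise.) -/
noncomputable def anchorBelow {n : ℕ} [NeZero n] (ε : Setoid (Fin n)) (x : Fin n) : Fin n :=
  if h : ((anchorsF ε).filter (· ≤ x)).Nonempty then ((anchorsF ε).filter (· ≤ x)).max' h
  else 0

/-- The "block" map defining `d_η`: an upper vertex `x` goes to the interval
`A_i = [min B_i, max B_i]` (of the un-nested class `B_i`) containing it; a lower
vertex `x'` goes to the `η`-class of `x`.  Blocks are labelled by the minimum of
the corresponding un-nested class, resp. class. -/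
noncomputable def dMap {n : ℕ} [NeZero n] (ε : Setoid (Fin n)) : V n → Fin n :=
  Sum.elim (fun x => anchorBelow ε x) fun x => minCl ε x

/-- The partition `d_η ∈ PP_n^fd`, with blocks `A_i ∪ B_i'` for the un-nested
`η`-classes `B_i` (where `A_i = [min B_i, max B_i]`), and `C'` for the nested
`η`-classes `C`. -/
noncomputable def dEta {n : ℕ} [NeZero n] (ε : Setoid (Fin n)) : Ptn n :=
  Setoid.ker (dMap ε)

/-- `h̄_ij = d_{η_ij}`. -/
noncomputable def hbar {n : ℕ} [NeZero n] (i j : Fin n) : Ptn n := dEta (etaOf i j)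

/-- The monoid `D_n = {d_η : η a planar equivalence}`, as a subset of `PP_n^fd`. -/
def DSet (n : ℕ) [NeZero n] : Set (Ptn n) :=
  {a | ∃ ε : Setoid (Fin n), IsPlanarEq ε ∧ a = dEta ε}

end PaperFDP

namespace PaperFDP

/-- `suc_ε(x)`: the least element of the `ε`-class of `x` greater than `x`, or `x`
itself if `x` is the maximum of its class. -/
noncomputable def sucS {n : ℕ} (ε : Setoid (Fin n)) (x : Fin n) : Fin n :=
  if h : ((Finset.univ.filter fun y => ε.r x y ∧ x < y)).Nonempty then
    ((Finset.univ.filter fun y => ε.r x y ∧ x < y)).min' h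
  else x


set_option linter.unusedVariables false
set_option linter.dupNamespace false
set_option linter.unusedTactic false
set_option linter.unreachableTactic false
-- ============ Stage 1 lemmas ============
variable {n : ℕ}

lemma rel_minCl (ε : Setoid (Fin n)) (x : Fin n) : ε.r x (minCl ε x) := by
  have := (Finset.univ.filter fun y => ε.r x y).min'_mem
    ⟨x, Finset.mem_filter.mpr ⟨Finset.mem_univ x, ε.iseqv.refl x⟩⟩
  exact (Finset.mem_filter.mp this).2

lemma rel_maxCl (ε : Setoid (Fin n)) (x : Fin n) : ε.r x (maxCl ε x) := by
  have := (Finset.univ.filter fun y => ε.r x y).max'_mem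
    ⟨x, Finset.mem_filter.mpr ⟨Finset.mem_univ x, ε.iseqv.refl x⟩⟩
  exact (Finset.mem_filter.mp this).2

lemma minCl_le (ε : Setoid (Fin n)) {x y : Fin n} (h : ε.r x y) : minCl ε x ≤ y :=
  Finset.min'_le _ _ (Finset.mem_filter.mpr ⟨Finset.mem_univ y, h⟩)

lemma le_maxCl (ε : Setoid (Fin n)) {x y : Fin n} (h : ε.r x y) : y ≤ maxCl ε x :=
  Finset.le_max' _ _ (Finset.mem_filter.mpr ⟨Finset.mem_univ y, h⟩)

lemma minCl_le_self (ε : Setoid (Fin n)) (x : Fin n) : minCl ε x ≤ x :=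
  minCl_le ε (ε.iseqv.refl x)

lemma le_maxCl_self (ε : Setoid (Fin n)) (x : Fin n) : x ≤ maxCl ε x :=
  le_maxCl ε (ε.iseqv.refl x)

lemma filter_rel_congr (ε : Setoid (Fin n)) {x y : Fin n} (h : ε.r x y) :
    (Finset.univ.filter fun z => ε.r x z) = (Finset.univ.filter fun z => ε.r y z) := by
  apply Finset.filter_congr
  intro z _
  constructor
  · intro hz; exact ε.iseqv.trans (ε.iseqv.symm h) hz
  · intro hz; exact ε.iseqv.trans h hz

lemma minCl_congr (ε : Setoid (Fin n)) {x y : Fin n} (h : ε.r x y) : minCl ε x = minCl ε y := by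
  unfold minCl; congr 1; exact filter_rel_congr ε h

lemma maxCl_congr (ε : Setoid (Fin n)) {x y : Fin n} (h : ε.r x y) : maxCl ε x = maxCl ε y := by
  unfold maxCl; congr 1; exact filter_rel_congr ε h

lemma clsS_congr (ε : Setoid (Fin n)) {x y : Fin n} (h : ε.r x y) : clsS ε x = clsS ε y := by
  ext z
  exact ⟨fun hz => ε.iseqv.trans (ε.iseqv.symm h) hz, fun hz => ε.iseqv.trans h hz⟩

lemma mem_clsS_self (ε : Setoid (Fin n)) (x : Fin n) : x ∈ clsS ε x := ε.iseqv.refl x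

lemma unnested_congr (ε : Setoid (Fin n)) {x y : Fin n} (h : ε.r x y) :
    Unnested ε x ↔ Unnested ε y := by
  unfold Unnested; rw [clsS_congr ε h]

lemma mem_anchorsF (ε : Setoid (Fin n)) {a : Fin n} :
    a ∈ anchorsF ε ↔ Unnested ε a ∧ minCl ε a = a := by
  simp [anchorsF]

lemma not_nestedBy_self {A : Set (Fin n)} : ¬ NestedBy A A := by
  rintro ⟨b₁, hb₁, b₂, hb₂, hlt, hcons, hall⟩
  exact absurd (hall b₁ hb₁).1 (lt_irrefl _)

lemma zero_mem_anchorsF [NeZero n] (ε : Setoid (Fin n)) : (0 : Fin n) ∈ anchorsF ε := by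
  rw [mem_anchorsF]
  constructor
  · rintro y ⟨b₁, hb₁, b₂, hb₂, hlt, hcons, hall⟩
    have := (hall 0 (ε.iseqv.refl 0)).1
    exact absurd this (by simp [Fin.lt_def])
  · exact le_antisymm (minCl_le_self ε 0) (Fin.zero_le _)

lemma anchorBelow_filter_nonempty [NeZero n] (ε : Setoid (Fin n)) (x : Fin n) :
    ((anchorsF ε).filter (· ≤ x)).Nonempty :=
  ⟨0, Finset.mem_filter.mpr ⟨zero_mem_anchorsF ε, Fin.zero_le _⟩⟩

lemma anchorBelow_eq_max' [NeZero n] (ε : Setoid (Fin n)) (x : Fin n) :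
    anchorBelow ε x = ((anchorsF ε).filter (· ≤ x)).max' (anchorBelow_filter_nonempty ε x) := by
  rw [anchorBelow, dif_pos (anchorBelow_filter_nonempty ε x)]

lemma anchorBelow_mem [NeZero n] (ε : Setoid (Fin n)) (x : Fin n) :
    anchorBelow ε x ∈ anchorsF ε := by
  rw [anchorBelow_eq_max']
  exact (Finset.mem_filter.mp
    (Finset.max'_mem ((anchorsF ε).filter (· ≤ x)) (anchorBelow_filter_nonempty ε x))).1

lemma anchorBelow_le_self [NeZero n] (ε : Setoid (Fin n)) (x : Fin n) :
    anchorBelow ε x ≤ x := by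
  rw [anchorBelow_eq_max']
  exact (Finset.mem_filter.mp
    (Finset.max'_mem ((anchorsF ε).filter (· ≤ x)) (anchorBelow_filter_nonempty ε x))).2

lemma le_anchorBelow [NeZero n] (ε : Setoid (Fin n)) {a x : Fin n}
    (ha : a ∈ anchorsF ε) (hax : a ≤ x) : a ≤ anchorBelow ε x := by
  rw [anchorBelow_eq_max']
  exact Finset.le_max' ((anchorsF ε).filter (· ≤ x)) a (Finset.mem_filter.mpr ⟨ha, hax⟩)

lemma anchorBelow_mono [NeZero n] (ε : Setoid (Fin n)) {x y : Fin n} (h : x ≤ y) :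
    anchorBelow ε x ≤ anchorBelow ε y :=
  le_anchorBelow ε (anchorBelow_mem ε x) (le_trans (anchorBelow_le_self ε x) h)

lemma anchorBelow_anchor [NeZero n] (ε : Setoid (Fin n)) {a : Fin n} (ha : a ∈ anchorsF ε) :
    anchorBelow ε a = a :=
  le_antisymm (anchorBelow_le_self ε a) (le_anchorBelow ε ha le_rfl)

lemma anchorBelow_eq_of [NeZero n] (ε : Setoid (Fin n)) {a x : Fin n}
    (ha : a ∈ anchorsF ε) (hax : a ≤ x)
    (hno : ∀ a' ∈ anchorsF ε, a' ≤ x → a' ≤ a) : anchorBelow ε x = a :=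
  le_antisymm (hno _ (anchorBelow_mem ε x) (anchorBelow_le_self ε x)) (le_anchorBelow ε ha hax)

-- Stage 2: planarity lemmas
variable {n : ℕ}

lemma nestedBy_anti {A A' B : Set (Fin n)} (hAA : A' ⊆ A) (h : NestedBy A B) : NestedBy A' B := by
  obtain ⟨b₁, hb₁, b₂, hb₂, hlt, hcons, hall⟩ := h
  exact ⟨b₁, hb₁, b₂, hb₂, hlt, hcons, fun a ha => hall a (hAA ha)⟩

lemma nestedBy_trans {A B C : Set (Fin n)} (h₁ : NestedBy A B) (h₂ : NestedBy B C) :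
    NestedBy A C := by
  obtain ⟨b₁, hb₁, b₂, hb₂, hlt, hcons, hall⟩ := h₁
  obtain ⟨c₁, hc₁, c₂, hc₂, hlt', hcons', hall'⟩ := h₂
  refine ⟨c₁, hc₁, c₂, hc₂, hlt', hcons', fun a ha => ?_⟩
  have h1 := hall a ha
  have h2 := hall' b₁ hb₁
  have h3 := hall' b₂ hb₂
  exact ⟨lt_trans h2.1 h1.1, lt_trans h1.2 h3.2⟩

lemma nested_span {ε : Setoid (Fin n)} {x y : Fin n} (h : NestedBy (clsS ε x) (clsS ε y)) :
    (maxCl ε x : ℕ) - (minCl ε x : ℕ) + 2 ≤ (maxCl ε y : ℕ) - (minCl ε y : ℕ) := by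
  obtain ⟨b₁, hb₁, b₂, hb₂, hlt, hcons, hall⟩ := h
  have h1 : b₁ < minCl ε x := (hall (minCl ε x) (rel_minCl ε x)).1
  have h2 : maxCl ε x < b₂ := (hall (maxCl ε x) (rel_maxCl ε x)).2
  have h3 : minCl ε y ≤ b₁ := minCl_le ε hb₁
  have h4 : b₂ ≤ maxCl ε y := le_maxCl ε hb₂
  have h5 : (minCl ε x : ℕ) ≤ maxCl ε x := by
    have := le_trans (minCl_le_self ε x) (le_maxCl_self ε x); exact this
  have hb1 : (b₁ : ℕ) < (minCl ε x : ℕ) := h1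
  have hb2 : (maxCl ε x : ℕ) < (b₂ : ℕ) := h2
  have hb3 : (minCl ε y : ℕ) ≤ (b₁ : ℕ) := h3
  have hb4 : (b₂ : ℕ) ≤ (maxCl ε y : ℕ) := h4
  omega

lemma descent_aux {η : Setoid (Fin n)} (hη : IsPlanarEq η) :
    ∀ k x, n ≤ ((maxCl η x : ℕ) - (minCl η x : ℕ)) + k → ¬ Unnested η x →
      ∃ y, Unnested η y ∧ NestedBy (clsS η x) (clsS η y) := by
  intro k
  induction k with
  | zero =>
    intro x hk _
    exfalso
    have : (maxCl η x : ℕ) < n := (maxCl η x).isLt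
    omega
  | succ k ih =>
    intro x hk hx
    rw [Unnested] at hx
    push_neg at hx
    obtain ⟨y, hy⟩ := hx
    have hxy : ¬ η.r x y := by
      intro h
      rw [clsS_congr η h] at hy
      exact not_nestedBy_self hy
    by_cases hyu : Unnested η y
    · exact ⟨y, hyu, hy⟩
    · have hspan := nested_span hy
      obtain ⟨z, hz1, hz2⟩ := ih y (by omega) hyu
      exact ⟨z, hz1, nestedBy_trans hy hz2⟩

lemma descent {η : Setoid (Fin n)} (hη : IsPlanarEq η) {x : Fin n} (hx : ¬ Unnested η x) :
    ∃ y, Unnested η y ∧ NestedBy (clsS η x) (clsS η y) :=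
  descent_aux hη n x (by omega) hx

/-- S0': for planar η, any anchor `a ≤ maxCl x` satisfies `a ≤ minCl x`. -/
lemma anchor_le_minCl {η : Setoid (Fin n)} (hη : IsPlanarEq η) {a x : Fin n}
    (ha : a ∈ anchorsF η) (h : a ≤ maxCl η x) : a ≤ minCl η x := by
  by_contra hlt
  push_neg at hlt
  obtain ⟨hau, hamin⟩ := (mem_anchorsF η).mp ha
  by_cases hr : η.r a x
  · -- a in class of x, so a = minCl x
    have : minCl η a = minCl η x := minCl_congr η hr
    rw [hamin] at this
    exact absurd this.le (not_le.mpr hlt)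
  · rcases hη a x hr with hsep | hn1 | hn2
    · rcases hsep with h1 | h1
      · -- all of cls a < all of cls x; a < minCl x, contra hlt
        have := h1 a (mem_clsS_self η a) (minCl η x) (rel_minCl η x)
        exact absurd (lt_trans this hlt) (lt_irrefl a)
      · -- all of cls x < all of cls a: maxCl x < a
        have := h1 a (mem_clsS_self η a) (maxCl η x) (rel_maxCl η x)
        exact absurd h (not_le.mpr this)
    · exact hau x hn1
    · -- cls x nested by cls a : b₁ ∈ cls a with b₁ < minCl x; but a = minCl (cls a) ≤ b₁
      obtain ⟨b₁, hb₁, b₂, hb₂, hlt', hcons, hall⟩ := hn2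
      have h1 : b₁ < minCl η x := (hall (minCl η x) (rel_minCl η x)).1
      have h2 : a ≤ b₁ := hamin ▸ minCl_le η hb₁
      exact absurd (lt_trans (lt_of_le_of_lt h2 h1) hlt) (lt_irrefl a)

-- Stage 3: interval structure
variable {n : ℕ}

lemma minCl_mem_anchorsF {η : Setoid (Fin n)} {x : Fin n} (hx : Unnested η x) :
    minCl η x ∈ anchorsF η := by
  rw [mem_anchorsF]
  refine ⟨(unnested_congr η (rel_minCl η x)).mp hx, ?_⟩
  rw [← minCl_congr η (rel_minCl η x)]

lemma unnested_anchorBelow [NeZero n] {η : Setoid (Fin n)} (hη : IsPlanarEq η) {x : Fin n}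
    (hx : Unnested η x) : anchorBelow η x = minCl η x := by
  apply le_antisymm
  · exact anchor_le_minCl hη (anchorBelow_mem η x)
      (le_trans (anchorBelow_le_self η x) (le_maxCl_self η x))
  · exact le_anchorBelow η (minCl_mem_anchorsF hx) (minCl_le_self η x)

lemma anchorBelow_rel_congr [NeZero n] {η : Setoid (Fin n)} (hη : IsPlanarEq η) {x y : Fin n}
    (h : η.r x y) : anchorBelow η x = anchorBelow η y := by
  have key : ∀ u v : Fin n, η.r u v → anchorBelow η u ≤ anchorBelow η v := by
    intro u v huv
    have h1 : anchorBelow η u ≤ maxCl η v := by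
      have := le_trans (anchorBelow_le_self η u) (le_maxCl_self η u)
      rwa [maxCl_congr η huv] at this
    have h2 : anchorBelow η u ≤ minCl η v := anchor_le_minCl hη (anchorBelow_mem η u) h1
    exact le_anchorBelow η (anchorBelow_mem η u) (le_trans h2 (minCl_le_self η v))
  exact le_antisymm (key x y h) (key y x (η.iseqv.symm h))

lemma le_maxCl_anchorBelow [NeZero n] {η : Setoid (Fin n)} (hη : IsPlanarEq η) (z : Fin n) :
    z ≤ maxCl η (anchorBelow η z) := by
  by_cases hz : Unnested η z
  · rw [unnested_anchorBelow hη hz, ← maxCl_congr η (rel_minCl η z)]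
    exact le_maxCl_self η z
  · obtain ⟨y, hyu, hn⟩ := descent hη hz
    obtain ⟨d₁, hd₁, d₂, hd₂, hdlt, hcons, hall⟩ := hn
    have hzd : d₁ < z ∧ z < d₂ := hall z (η.iseqv.refl z)
    have hd₁u : Unnested η d₁ := (unnested_congr η hd₁).mp hyu
    have hAd : anchorBelow η z = anchorBelow η d₁ := by
      apply le_antisymm
      · -- anchorBelow z is anchor ≤ z < d₂ ≤ maxCl d₁
        have h1 : anchorBelow η z ≤ maxCl η d₁ := by
          have hd2 : d₂ ≤ maxCl η d₁ := by
            rw [maxCl_congr η (η.iseqv.symm hd₁)]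
            exact le_maxCl η hd₂
          exact le_trans (le_of_lt (lt_of_le_of_lt (anchorBelow_le_self η z) hzd.2)) hd2
        have h2 := anchor_le_minCl hη (anchorBelow_mem η z) h1
        exact le_anchorBelow η (anchorBelow_mem η z) (le_trans h2 (minCl_le_self η d₁))
      · exact anchorBelow_mono η (le_of_lt hzd.1)
    rw [hAd, unnested_anchorBelow hη hd₁u, ← maxCl_congr η (rel_minCl η d₁)]
    have : d₂ ≤ maxCl η d₁ := by
      rw [maxCl_congr η (η.iseqv.symm hd₁)]
      exact le_maxCl η hd₂
    exact le_of_lt (lt_of_lt_of_le hzd.2 this)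

lemma anchorBelow_maxCl_anchor [NeZero n] {η : Setoid (Fin n)} (hη : IsPlanarEq η) {a : Fin n}
    (ha : a ∈ anchorsF η) : anchorBelow η (maxCl η a) = a := by
  rw [← anchorBelow_rel_congr hη (rel_maxCl η a), anchorBelow_anchor η ha]

-- Stage 4: etaOf / sup characterization, kerP, p and q identification
variable {n : ℕ}

lemma etaOf_r {p q x y : Fin n} :
    (etaOf p q).r x y ↔ (x = y ∨ (x = p ∧ y = q) ∨ (x = q ∧ y = p)) := by
  show (if x = q then p else x) = (if y = q then p else y) ↔ _
  split_ifs with h1 h2 h2 <;> subst_vars <;>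
    constructor <;> intro h <;> first
      | tauto
      | (rcases h with h | ⟨h1, h2⟩ | ⟨h1, h2⟩ <;> subst_vars <;> tauto)

lemma etaOf_rel_pq (p q : Fin n) : (etaOf p q).r p q := by
  rw [etaOf_r]; tauto

lemma sup_r {η : Setoid (Fin n)} {p q x y : Fin n} :
    (η ⊔ etaOf p q).r x y ↔
      (η.r x y ∨ (η.r x p ∧ η.r q y) ∨ (η.r x q ∧ η.r p y)) := by
  set R : Fin n → Fin n → Prop :=
    fun x y => η.r x y ∨ (η.r x p ∧ η.r q y) ∨ (η.r x q ∧ η.r p y) with hR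
  have hrefl : ∀ x, R x x := fun x => Or.inl (η.iseqv.refl x)
  have hsymm : ∀ {x y}, R x y → R y x := by
    rintro x y (h | ⟨h1, h2⟩ | ⟨h1, h2⟩)
    · exact Or.inl (η.iseqv.symm h)
    · exact Or.inr (Or.inr ⟨η.iseqv.symm h2, η.iseqv.symm h1⟩)
    · exact Or.inr (Or.inl ⟨η.iseqv.symm h2, η.iseqv.symm h1⟩)
  have htrans : ∀ {x y z}, R x y → R y z → R x z := by
    rintro x y z (h | ⟨h1, h2⟩ | ⟨h1, h2⟩) (g | ⟨g1, g2⟩ | ⟨g1, g2⟩)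
    · exact Or.inl (η.iseqv.trans h g)
    · exact Or.inr (Or.inl ⟨η.iseqv.trans h g1, g2⟩)
    · exact Or.inr (Or.inr ⟨η.iseqv.trans h g1, g2⟩)
    · exact Or.inr (Or.inl ⟨h1, η.iseqv.trans h2 g⟩)
    · exact Or.inl (η.iseqv.trans h1 (η.iseqv.trans (η.iseqv.symm (η.iseqv.trans h2 g1)) g2))
    · exact Or.inl (η.iseqv.trans h1 g2)
    · exact Or.inr (Or.inr ⟨h1, η.iseqv.trans h2 g⟩)
    · exact Or.inl (η.iseqv.trans h1 g2)
    · exact Or.inl (η.iseqv.trans h1 (η.iseqv.trans (η.iseqv.symm (η.iseqv.trans h2 g1)) g2))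
  let σ : Setoid (Fin n) := ⟨R, hrefl, fun h => hsymm h, fun h g => htrans h g⟩
  have h1 : η ⊔ etaOf p q ≤ σ := by
    apply sup_le
    · intro x y h; exact Or.inl h
    · intro x y h
      rcases etaOf_r.mp h with h | ⟨h1, h2⟩ | ⟨h1, h2⟩
      · exact h ▸ hrefl x
      · rw [h1, h2]; exact Or.inr (Or.inl ⟨η.iseqv.refl p, η.iseqv.refl q⟩)
      · rw [h1, h2]; exact Or.inr (Or.inr ⟨η.iseqv.refl q, η.iseqv.refl p⟩)
  have h2 : σ ≤ η ⊔ etaOf p q := by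
    intro x y h
    have hη' : η ≤ η ⊔ etaOf p q := le_sup_left
    have he' : etaOf p q ≤ η ⊔ etaOf p q := le_sup_right
    have hpq : (η ⊔ etaOf p q).r p q := he' (etaOf_rel_pq p q)
    rcases h with h | ⟨ha, hb⟩ | ⟨ha, hb⟩
    · exact hη' h
    · exact (η ⊔ etaOf p q).iseqv.trans (hη' ha)
        ((η ⊔ etaOf p q).iseqv.trans hpq (hη' hb))
    · exact (η ⊔ etaOf p q).iseqv.trans (hη' ha)
        ((η ⊔ etaOf p q).iseqv.trans ((η ⊔ etaOf p q).iseqv.symm hpq) (hη' hb))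
  exact ⟨fun h => h1 h, fun h => h2 h⟩

lemma kerP_dEta_r [NeZero n] {η : Setoid (Fin n)} {x y : Fin n} :
    (kerP (dEta η)).r x y ↔ anchorBelow η x = anchorBelow η y := Iff.rfl

lemma p_eq_maxCl [NeZero n] {η : Setoid (Fin n)} (hη : IsPlanarEq η) (i : Fin n) :
    maxCl (kerP (dEta η)) i = maxCl η (anchorBelow η i) := by
  apply le_antisymm
  · apply Finset.max'_le
    intro y hy
    have hy' : anchorBelow η i = anchorBelow η y := (Finset.mem_filter.mp hy).2
    have := le_maxCl_anchorBelow hη y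
    rwa [← hy'] at this
  · apply Finset.le_max'
    refine Finset.mem_filter.mpr ⟨Finset.mem_univ _, ?_⟩
    show anchorBelow η i = anchorBelow η (maxCl η (anchorBelow η i))
    rw [anchorBelow_maxCl_anchor hη (anchorBelow_mem η i)]

lemma q_eq_minCl [NeZero n] {η : Setoid (Fin n)} (hη : IsPlanarEq η) (j : Fin n) :
    minCl (kerP (dEta η)) j = anchorBelow η j := by
  apply le_antisymm
  · apply Finset.min'_le
    refine Finset.mem_filter.mpr ⟨Finset.mem_univ _, ?_⟩
    show anchorBelow η j = anchorBelow η (anchorBelow η j)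
    rw [anchorBelow_anchor η (anchorBelow_mem η j)]
  · apply Finset.le_min'
    intro y hy
    have hy' : anchorBelow η j = anchorBelow η y := (Finset.mem_filter.mp hy).2
    rw [hy']
    exact anchorBelow_le_self η y

-- Stage 5a: structure of μ = η ⊔ etaOf p q
variable {n : ℕ} [NeZero n] {η : Setoid (Fin n)} {i j p q : Fin n}

lemma L_rel_aip (hp : p = maxCl η (anchorBelow η i)) : η.r (anchorBelow η i) p :=
  hp ▸ rel_maxCl η (anchorBelow η i)

lemma L_minp (hη : IsPlanarEq η) (hp : p = maxCl η (anchorBelow η i)) :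
    minCl η p = anchorBelow η i := by
  have h1 : minCl η p = minCl η (anchorBelow η i) := (minCl_congr η (L_rel_aip hp)).symm
  have h2 := ((mem_anchorsF η).mp (anchorBelow_mem η i)).2
  rw [h1, h2]

lemma L_maxp (hp : p = maxCl η (anchorBelow η i)) : maxCl η p = p := by
  rw [hp, ← maxCl_congr η (rel_maxCl η (anchorBelow η i))]

lemma L_unn_p (hp : p = maxCl η (anchorBelow η i)) : Unnested η p :=
  (unnested_congr η (L_rel_aip hp)).mp ((mem_anchorsF η).mp (anchorBelow_mem η i)).1

lemma L_q_anchor (hq : q = anchorBelow η j) : q ∈ anchorsF η := hq ▸ anchorBelow_mem η j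

lemma L_minq (hq : q = anchorBelow η j) : minCl η q = q :=
  ((mem_anchorsF η).mp (L_q_anchor hq)).2

lemma L_unn_q (hq : q = anchorBelow η j) : Unnested η q :=
  ((mem_anchorsF η).mp (L_q_anchor hq)).1

lemma L_i_le_p (hη : IsPlanarEq η) (hp : p = maxCl η (anchorBelow η i)) : i ≤ p :=
  hp ▸ le_maxCl_anchorBelow hη i

lemma L_aij (hij : i < j) (hq : q = anchorBelow η j) : anchorBelow η i ≤ q :=
  hq ▸ anchorBelow_mono η hij.le

lemma L_f7 (hη : IsPlanarEq η) (hp : p = maxCl η (anchorBelow η i)) :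
    ∀ a ∈ anchorsF η, a ≤ p → a ≤ anchorBelow η i := by
  intro a ha hap
  have : a ≤ minCl η (anchorBelow η i) := anchor_le_minCl hη ha (hp ▸ hap)
  rwa [((mem_anchorsF η).mp (anchorBelow_mem η i)).2] at this

lemma L_cls_p_le (hp : p = maxCl η (anchorBelow η i)) {z : Fin n} (h : η.r p z) : z ≤ p := by
  have := le_maxCl η h
  rwa [L_maxp hp] at this

lemma L_q_le_cls (hq : q = anchorBelow η j) {z : Fin n} (h : η.r q z) : q ≤ z := by
  have := minCl_le η h
  rwa [L_minq hq] at this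

lemma L_rel_pq_iff (hη : IsPlanarEq η) (hp : p = maxCl η (anchorBelow η i))
    (hq : q = anchorBelow η j) : η.r p q ↔ anchorBelow η i = q := by
  constructor
  · intro h
    have h1 : anchorBelow η p = anchorBelow η q := anchorBelow_rel_congr hη h
    have h2 : anchorBelow η p = anchorBelow η i := by
      rw [← anchorBelow_rel_congr hη (L_rel_aip hp), anchorBelow_anchor η (anchorBelow_mem η i)]
    have h3 : anchorBelow η q = q := anchorBelow_anchor η (L_q_anchor hq)
    rw [← h2, h1, h3]
  · intro h
    have h1 : η.r (anchorBelow η i) p := L_rel_aip hp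
    exact η.iseqv.trans (η.iseqv.symm h1) (h ▸ η.iseqv.refl (anchorBelow η i))

lemma L_ai_lt_q (hη : IsPlanarEq η) (hij : i < j) (hp : p = maxCl η (anchorBelow η i))
    (hq : q = anchorBelow η j) (hnpq : ¬ η.r p q) : anchorBelow η i < q :=
  lt_of_le_of_ne (L_aij hij hq) (fun h => hnpq ((L_rel_pq_iff hη hp hq).mpr h))

lemma L_p_lt_q (hη : IsPlanarEq η) (hij : i < j) (hp : p = maxCl η (anchorBelow η i))
    (hq : q = anchorBelow η j) (hnpq : ¬ η.r p q) : p < q := by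
  by_contra h
  push_neg at h
  have := L_f7 hη hp q (L_q_anchor hq) h
  exact absurd (L_ai_lt_q hη hij hp hq hnpq) (not_lt.mpr this)

lemma L_Az_le_minCl (hη : IsPlanarEq η) (z : Fin n) : anchorBelow η z ≤ minCl η z := by
  have h1 : anchorBelow η (minCl η z) = anchorBelow η z :=
    (anchorBelow_rel_congr hη (rel_minCl η z)).symm
  exact h1 ▸ anchorBelow_le_self η (minCl η z)

lemma L_B3 (hη : IsPlanarEq η) (hp : p = maxCl η (anchorBelow η i))
    (hq : q = anchorBelow η j) (hip : i ≤ p) {z w : Fin n}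
    (hz1 : p < z) (hz2 : z < q) (hzw : η.r z w) : p < w ∧ w < q := by
  have hAz : p < anchorBelow η z := by
    by_contra h
    push_neg at h
    have h1 : anchorBelow η i ≤ anchorBelow η z :=
      anchorBelow_mono η (le_trans hip hz1.le)
    have h2 : anchorBelow η z ≤ anchorBelow η i :=
      L_f7 hη hp _ (anchorBelow_mem η z) h
    have h3 : anchorBelow η z = anchorBelow η i := le_antisymm h2 h1
    have h4 := le_maxCl_anchorBelow hη z
    rw [h3, ← hp] at h4
    exact absurd hz1 (not_lt.mpr h4)
  constructor
  · have h5 : anchorBelow η w = anchorBelow η z := (anchorBelow_rel_congr hη hzw).symm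
    have h6 : anchorBelow η w ≤ minCl η w := L_Az_le_minCl hη w
    have h7 := minCl_le η (η.iseqv.refl w)
    calc p < anchorBelow η z := hAz
    _ = anchorBelow η w := h5.symm
    _ ≤ w := le_trans h6 h7
  · by_contra h
    push_neg at h
    have h1 : q ≤ anchorBelow η w := le_anchorBelow η (L_q_anchor hq) h
    have h2 : anchorBelow η w = anchorBelow η z := (anchorBelow_rel_congr hη hzw).symm
    have h3 : anchorBelow η z ≤ z := anchorBelow_le_self η z
    rw [h2] at h1
    exact absurd (lt_of_le_of_lt (le_trans h1 h3) hz2) (lt_irrefl q)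

-- μ basics
lemma L_mu_pq : (η ⊔ etaOf p q).r p q :=
  sup_r.mpr (Or.inr (Or.inl ⟨η.iseqv.refl p, η.iseqv.refl q⟩))

lemma L_mu_merged_rel {x : Fin n} (h : η.r x p ∨ η.r x q) : (η ⊔ etaOf p q).r x p := by
  rcases h with h | h
  · exact sup_r.mpr (Or.inl h)
  · exact sup_r.mpr (Or.inr (Or.inr ⟨h, η.iseqv.refl p⟩))

lemma L_mu_unmerged_iff {x : Fin n} (h1 : ¬ η.r x p) (h2 : ¬ η.r x q) (z : Fin n) :
    (η ⊔ etaOf p q).r x z ↔ η.r x z := by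
  constructor
  · intro h
    rcases sup_r.mp h with h | ⟨ha, hb⟩ | ⟨ha, hb⟩
    · exact h
    · exact absurd ha h1
    · exact absurd ha h2
  · intro h; exact sup_r.mpr (Or.inl h)

lemma L_clsS_mu_unmerged {x : Fin n} (h1 : ¬ η.r x p) (h2 : ¬ η.r x q) :
    clsS (η ⊔ etaOf p q) x = clsS η x := by
  ext z; exact L_mu_unmerged_iff h1 h2 z

lemma L_mu_p_mem (hnpq : ¬ η.r p q) {b : Fin n} :
    (η ⊔ etaOf p q).r p b ↔ η.r p b ∨ η.r q b := by
  constructor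
  · intro h
    rcases sup_r.mp h with h | ⟨ha, hb⟩ | ⟨ha, hb⟩
    · exact Or.inl h
    · exact Or.inr hb
    · exact absurd ha hnpq
  · rintro (h | h)
    · exact sup_r.mpr (Or.inl h)
    · exact sup_r.mpr (Or.inr (Or.inl ⟨η.iseqv.refl p, h⟩))

lemma L_mu_eq_eta (h : η.r p q) : η ⊔ etaOf p q = η := by
  apply sup_eq_left.mpr
  intro x y hxy
  rcases etaOf_r.mp hxy with h1 | ⟨h1, h2⟩ | ⟨h1, h2⟩
  · exact h1 ▸ η.iseqv.refl x
  · rw [h1, h2]; exact h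
  · rw [h1, h2]; exact η.iseqv.symm h

lemma L_minCl_mu (hη : IsPlanarEq η) (hij : i < j) (hp : p = maxCl η (anchorBelow η i))
    (hq : q = anchorBelow η j) (x : Fin n) :
    minCl (η ⊔ etaOf p q) x =
      if η.r x p ∨ η.r x q then anchorBelow η i else minCl η x := by
  split_ifs with hcond
  · apply le_antisymm
    · apply Finset.min'_le
      refine Finset.mem_filter.mpr ⟨Finset.mem_univ _, ?_⟩
      rcases hcond with h | h
      · exact sup_r.mpr (Or.inl (η.iseqv.trans h (η.iseqv.symm (L_rel_aip hp))))
      · exact sup_r.mpr (Or.inr (Or.inr ⟨h, η.iseqv.symm (L_rel_aip hp)⟩))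
    · apply Finset.le_min'
      intro y hy
      have hy' := (Finset.mem_filter.mp hy).2
      have key : η.r p y ∨ η.r q y → anchorBelow η i ≤ y := by
        rintro (h | h)
        · have := minCl_le η h; rwa [L_minp hη hp] at this
        · exact le_trans (L_aij hij hq) (L_q_le_cls hq h)
      rcases sup_r.mp hy' with h | ⟨ha, hb⟩ | ⟨ha, hb⟩
      · rcases hcond with hc | hc
        · exact key (Or.inl (η.iseqv.trans (η.iseqv.symm hc) h))
        · exact key (Or.inr (η.iseqv.trans (η.iseqv.symm hc) h))
      · exact key (Or.inr hb)
      · exact key (Or.inl hb)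
  · push_neg at hcond
    unfold minCl
    congr 1
    apply Finset.filter_congr
    intro z _
    constructor
    · intro h; exact (L_mu_unmerged_iff hcond.1 hcond.2 z).mp h
    · intro h; exact (L_mu_unmerged_iff hcond.1 hcond.2 z).mpr h

-- Stage 5b: nesting transfer, planarity of μ, anchors of μ
variable {n : ℕ} [NeZero n] {η : Setoid (Fin n)} {i j p q : Fin n}

lemma sep_swap {A B : Set (Fin n)} (h : SepSets A B) : SepSets B A := by
  rcases h with h | h
  · exact Or.inr (fun b hb a ha => h a ha b hb)
  · exact Or.inl (fun b hb a ha => h a ha b hb)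

lemma L_clsp_sub : clsS η p ⊆ clsS (η ⊔ etaOf p q) p :=
  fun z hz => sup_r.mpr (Or.inl hz)

lemma L_clsq_sub : clsS η q ⊆ clsS (η ⊔ etaOf p q) p :=
  fun z hz => sup_r.mpr (Or.inr (Or.inl ⟨η.iseqv.refl p, hz⟩))

lemma L_nest_pk (hη : IsPlanarEq η) (hij : i < j) (hp : p = maxCl η (anchorBelow η i))
    (hq : q = anchorBelow η j) (hnpq : ¬ η.r p q) {A : Set (Fin n)}
    (h : NestedBy A (clsS η p)) : NestedBy A (clsS (η ⊔ etaOf p q) p) := by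
  obtain ⟨b₁, hb₁, b₂, hb₂, hlt, hcons, hall⟩ := h
  refine ⟨b₁, L_clsp_sub hb₁, b₂, L_clsp_sub hb₂, hlt, ?_, hall⟩
  intro b hb
  rcases (L_mu_p_mem hnpq).mp hb with h | h
  · exact hcons b h
  · rintro ⟨h1, h2⟩
    have : b₂ ≤ p := L_cls_p_le hp hb₂
    have hqb : q ≤ b := L_q_le_cls hq h
    have := L_p_lt_q hη hij hp hq hnpq
    exact absurd h2 (not_lt.mpr (le_trans (by omega : b₂ ≤ b) le_rfl))

lemma L_nest_ql (hη : IsPlanarEq η) (hij : i < j) (hp : p = maxCl η (anchorBelow η i))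
    (hq : q = anchorBelow η j) (hnpq : ¬ η.r p q) {A : Set (Fin n)}
    (h : NestedBy A (clsS η q)) : NestedBy A (clsS (η ⊔ etaOf p q) p) := by
  obtain ⟨b₁, hb₁, b₂, hb₂, hlt, hcons, hall⟩ := h
  refine ⟨b₁, L_clsq_sub hb₁, b₂, L_clsq_sub hb₂, hlt, ?_, hall⟩
  intro b hb
  rcases (L_mu_p_mem hnpq).mp hb with h | h
  · rintro ⟨h1, h2⟩
    have hb' : b ≤ p := L_cls_p_le hp h
    have : q ≤ b₁ := L_q_le_cls hq hb₁
    have := L_p_lt_q hη hij hp hq hnpq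
    omega
  · exact hcons b h

lemma L_nest_gap (hη : IsPlanarEq η) (hij : i < j) (hp : p = maxCl η (anchorBelow η i))
    (hq : q = anchorBelow η j) (hnpq : ¬ η.r p q) {A : Set (Fin n)}
    (hA : ∀ a ∈ A, p < a ∧ a < q) : NestedBy A (clsS (η ⊔ etaOf p q) p) := by
  refine ⟨p, (η ⊔ etaOf p q).iseqv.refl p, q, L_mu_pq, L_p_lt_q hη hij hp hq hnpq, ?_, hA⟩
  intro b hb
  rcases (L_mu_p_mem hnpq).mp hb with h | h
  · rintro ⟨h1, h2⟩
    exact absurd h1 (not_lt.mpr (L_cls_p_le hp h))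
  · rintro ⟨h1, h2⟩
    exact absurd h2 (not_lt.mpr (L_q_le_cls hq h))

lemma L_helper (hη : IsPlanarEq η) (hij : i < j) (hp : p = maxCl η (anchorBelow η i))
    (hq : q = anchorBelow η j) (hnpq : ¬ η.r p q) {y : Fin n}
    (hy1 : ¬ η.r p y) (hy2 : ¬ η.r q y) :
    SepSets (clsS (η ⊔ etaOf p q) p) (clsS η y) ∨
      NestedBy (clsS η y) (clsS (η ⊔ etaOf p q) p) := by
  rcases hη p y hy1 with hsep1 | hn | hn
  · rcases hη q y hy2 with hsep2 | hn | hn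
    · rcases hsep1 with h1p | h2p
      · rcases hsep2 with h1q | h2q
        · -- cls p < cls y and cls q < cls y
          refine Or.inl (Or.inl ?_)
          intro a ha b hb
          rcases (L_mu_p_mem hnpq).mp ha with h | h
          · exact h1p a h b hb
          · exact h1q a h b hb
        · -- cls p < cls y and cls y < cls q : gap
          refine Or.inr (L_nest_gap hη hij hp hq hnpq ?_)
          intro b hb
          exact ⟨h1p p (η.iseqv.refl p) b hb, h2q q (η.iseqv.refl q) b hb⟩
      · rcases hsep2 with h1q | h2q
        · -- cls y < cls p and cls q < cls y : contradiction
          exfalso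
          have hyp : y < p := h2p p (η.iseqv.refl p) y (η.iseqv.refl y)
          have hqy : q < y := h1q q (η.iseqv.refl q) y (η.iseqv.refl y)
          have := L_p_lt_q hη hij hp hq hnpq
          omega
        · -- cls y < cls p and cls y < cls q
          refine Or.inl (Or.inr ?_)
          intro a ha b hb
          rcases (L_mu_p_mem hnpq).mp ha with h | h
          · exact h2p a h b hb
          · exact h2q a h b hb
    · exact absurd hn (L_unn_q hq y)
    · exact Or.inr (L_nest_ql hη hij hp hq hnpq hn)
  · exact absurd hn (L_unn_p hp y)
  · exact Or.inr (L_nest_pk hη hij hp hq hnpq hn)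

lemma L_mu_planar (hη : IsPlanarEq η) (hij : i < j) (hp : p = maxCl η (anchorBelow η i))
    (hq : q = anchorBelow η j) : IsPlanarEq (η ⊔ etaOf p q) := by
  by_cases hpq : η.r p q
  · rw [L_mu_eq_eta hpq]; exact hη
  · intro x y hxy
    have hxyη : ¬ η.r x y := fun h => hxy (sup_r.mpr (Or.inl h))
    by_cases hx : η.r x p ∨ η.r x q <;> by_cases hy : η.r y p ∨ η.r y q
    · exact absurd ((η ⊔ etaOf p q).iseqv.trans (L_mu_merged_rel hx)
        ((η ⊔ etaOf p q).iseqv.symm (L_mu_merged_rel hy))) hxy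
    · push_neg at hy
      have hclsx : clsS (η ⊔ etaOf p q) x = clsS (η ⊔ etaOf p q) p :=
        clsS_congr _ (L_mu_merged_rel hx)
      have hclsy : clsS (η ⊔ etaOf p q) y = clsS η y := L_clsS_mu_unmerged hy.1 hy.2
      rcases L_helper hη hij hp hq hpq (fun h => hy.1 (η.iseqv.symm h))
          (fun h => hy.2 (η.iseqv.symm h)) with hs | hn
      · rw [hclsx, hclsy]; exact Or.inl hs
      · rw [hclsx, hclsy]; exact Or.inr (Or.inr hn)
    · push_neg at hx
      have hclsy : clsS (η ⊔ etaOf p q) y = clsS (η ⊔ etaOf p q) p :=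
        clsS_congr _ (L_mu_merged_rel hy)
      have hclsx : clsS (η ⊔ etaOf p q) x = clsS η x := L_clsS_mu_unmerged hx.1 hx.2
      rcases L_helper hη hij hp hq hpq (fun h => hx.1 (η.iseqv.symm h))
          (fun h => hx.2 (η.iseqv.symm h)) with hs | hn
      · rw [hclsx, hclsy]; exact Or.inl (sep_swap hs)
      · rw [hclsx, hclsy]; exact Or.inr (Or.inl hn)
    · push_neg at hx hy
      rw [L_clsS_mu_unmerged hx.1 hx.2, L_clsS_mu_unmerged hy.1 hy.2]
      exact hη x y hxyη

lemma L_anchors_mu (hη : IsPlanarEq η) (hij : i < j) (hp : p = maxCl η (anchorBelow η i))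
    (hq : q = anchorBelow η j) (hnpq : ¬ η.r p q) {a : Fin n} :
    a ∈ anchorsF (η ⊔ etaOf p q) ↔ a ∈ anchorsF η ∧ ¬(p < a ∧ a ≤ q) := by
  have hplq := L_p_lt_q hη hij hp hq hnpq
  constructor
  · intro ha
    obtain ⟨huμ, hmμ⟩ := (mem_anchorsF _).mp ha
    by_cases ham : η.r a p ∨ η.r a q
    · have h1 : minCl (η ⊔ etaOf p q) a = anchorBelow η i := by
        rw [L_minCl_mu hη hij hp hq a, if_pos ham]
      have h2 : a = anchorBelow η i := by rw [← hmμ, h1]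
      constructor
      · rw [h2]; exact anchorBelow_mem η i
      · rintro ⟨hc1, _⟩
        have : a ≤ p := h2 ▸ le_trans (anchorBelow_le_self η i) (L_i_le_p hη hp)
        omega
    · push_neg at ham
      have h1 : minCl η a = a := by
        have := L_minCl_mu hη hij hp hq a
        rw [if_neg (by push_neg; exact ham)] at this
        rw [← this, hmμ]
      have h2 : Unnested η a := by
        intro y hny
        by_cases hym : η.r y p ∨ η.r y q
        · rcases hym with hym | hym
          · have hny' : NestedBy (clsS η a) (clsS η p) := by
              rwa [clsS_congr η hym] at hny
            have hh := L_nest_pk hη hij hp hq hnpq hny'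
            apply huμ p
            rwa [L_clsS_mu_unmerged ham.1 ham.2]
          · have hny' : NestedBy (clsS η a) (clsS η q) := by
              rwa [clsS_congr η hym] at hny
            have hh := L_nest_ql hη hij hp hq hnpq hny'
            apply huμ p
            rwa [L_clsS_mu_unmerged ham.1 ham.2]
        · push_neg at hym
          apply huμ y
          rwa [L_clsS_mu_unmerged ham.1 ham.2, L_clsS_mu_unmerged hym.1 hym.2]
      refine ⟨(mem_anchorsF η).mpr ⟨h2, h1⟩, ?_⟩
      rintro ⟨hc1, hc2⟩
      have haq : a < q := lt_of_le_of_ne hc2 (fun h => ham.2 (h ▸ η.iseqv.refl a))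
      have hgap : ∀ w ∈ clsS η a, p < w ∧ w < q := by
        intro w hw
        exact L_B3 hη hp hq (L_i_le_p hη hp) hc1 haq hw
      apply huμ p
      rw [L_clsS_mu_unmerged ham.1 ham.2]
      exact L_nest_gap hη hij hp hq hnpq hgap
  · rintro ⟨haη, hnotin⟩
    obtain ⟨hua, hma⟩ := (mem_anchorsF η).mp haη
    have hmain : minCl (η ⊔ etaOf p q) a = a := by
      rw [L_minCl_mu hη hij hp hq a]
      split_ifs with ham
      · rcases ham with ham | ham
        · have : minCl η a = minCl η p := minCl_congr η ham
          rw [hma, L_minp hη hp] at this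
          exact this.symm
        · have : minCl η a = minCl η q := minCl_congr η ham
          rw [hma, L_minq hq] at this
          exact absurd ⟨this ▸ hplq, this.le⟩ hnotin
      · exact hma
    refine (mem_anchorsF _).mpr ⟨?_, hmain⟩
    intro y hny
    by_cases ham : η.r a p ∨ η.r a q
    · -- a is in the merged class: a = minCl μ a = ai, cls μ a = cls μ p
      have hclsa : clsS (η ⊔ etaOf p q) a = clsS (η ⊔ etaOf p q) p :=
        clsS_congr _ (L_mu_merged_rel ham)
      rw [hclsa] at hny
      have hny' : NestedBy (clsS η p) (clsS (η ⊔ etaOf p q) y) :=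
        nestedBy_anti L_clsp_sub hny
      by_cases hym : η.r y p ∨ η.r y q
      · have hclsy : clsS (η ⊔ etaOf p q) y = clsS (η ⊔ etaOf p q) p :=
          clsS_congr _ (L_mu_merged_rel hym)
        rw [hclsy] at hny'
        obtain ⟨b₁, hb₁, b₂, hb₂, hlt, hcons, hall⟩ := hny'
        rcases (L_mu_p_mem hnpq).mp hb₁ with h | h
        · exact absurd (hall b₁ h).1 (lt_irrefl b₁)
        · have h1 : q ≤ b₁ := L_q_le_cls hq h
          have h2 : b₁ < p := (hall p (η.iseqv.refl p)).1
          omega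
      · push_neg at hym
        rw [L_clsS_mu_unmerged hym.1 hym.2] at hny'
        exact L_unn_p hp y hny'
    · push_neg at ham
      rw [L_clsS_mu_unmerged ham.1 ham.2] at hny
      by_cases hym : η.r y p ∨ η.r y q
      · have hclsy : clsS (η ⊔ etaOf p q) y = clsS (η ⊔ etaOf p q) p :=
          clsS_congr _ (L_mu_merged_rel hym)
        rw [hclsy] at hny
        obtain ⟨b₁, hb₁, b₂, hb₂, hlt, hcons, hall⟩ := hny
        rcases (L_mu_p_mem hnpq).mp hb₁ with h1 | h1 <;>
          rcases (L_mu_p_mem hnpq).mp hb₂ with h2 | h2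
        · -- both in cls η p
          apply hua p
          refine ⟨b₁, h1, b₂, h2, hlt, ?_, hall⟩
          intro b hb
          exact hcons b (L_clsp_sub hb)
        · -- b₁ in cls p, b₂ in cls q: then b₁ = p, b₂ = q
          have hb1p : b₁ ≤ p := L_cls_p_le hp h1
          have hb2q : q ≤ b₂ := L_q_le_cls hq h2
          have hb1 : b₁ = p := by
            by_contra hne
            exact hcons p ((η ⊔ etaOf p q).iseqv.refl p)
              ⟨lt_of_le_of_ne hb1p hne, lt_of_lt_of_le hplq hb2q⟩
          have hb2 : b₂ = q := by
            by_contra hne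
            exact hcons q L_mu_pq
              ⟨hb1 ▸ hplq, lt_of_le_of_ne hb2q (fun h => hne h.symm)⟩
          have := hall a (η.iseqv.refl a)
          rw [hb1, hb2] at this
          exact hnotin ⟨this.1, this.2.le⟩
        · -- b₁ in cls q, b₂ in cls p: impossible
          have h3 : q ≤ b₁ := L_q_le_cls hq h1
          have h4 : b₂ ≤ p := L_cls_p_le hp h2
          omega
        · -- both in cls η q
          apply hua q
          refine ⟨b₁, h1, b₂, h2, hlt, ?_, hall⟩
          intro b hb
          exact hcons b (L_clsq_sub hb)
      · push_neg at hym
        rw [L_clsS_mu_unmerged hym.1 hym.2] at hny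
        exact hua y hny

lemma L_anchorBelow_mu (hη : IsPlanarEq η) (hij : i < j) (hp : p = maxCl η (anchorBelow η i))
    (hq : q = anchorBelow η j) (x : Fin n) :
    anchorBelow (η ⊔ etaOf p q) x =
      if p < anchorBelow η x ∧ anchorBelow η x ≤ q then anchorBelow η i
      else anchorBelow η x := by
  by_cases hpq : η.r p q
  · have hqai : anchorBelow η i = q := (L_rel_pq_iff hη hp hq).mp hpq
    rw [L_mu_eq_eta hpq, if_neg]
    rintro ⟨h1, h2⟩
    have : q ≤ p := hqai ▸ le_trans (anchorBelow_le_self η i) (L_i_le_p hη hp)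
    omega
  · have hplq := L_p_lt_q hη hij hp hq hpq
    have hailep : anchorBelow η i ≤ p := le_trans (anchorBelow_le_self η i) (L_i_le_p hη hp)
    split_ifs with hcond
    · apply anchorBelow_eq_of
      · exact (L_anchors_mu hη hij hp hq hpq).mpr
          ⟨anchorBelow_mem η i, fun h => absurd h.1 (not_lt.mpr hailep)⟩
      · exact le_trans hailep (le_trans hcond.1.le (anchorBelow_le_self η x))
      · intro a' ha' hax
        obtain ⟨ha'η, ha'notin⟩ := (L_anchors_mu hη hij hp hq hpq).mp ha'
        by_contra hgt
        push_neg at hgt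
        have h1 : a' ≤ anchorBelow η x := le_anchorBelow η ha'η hax
        by_cases h2 : a' ≤ p
        · exact absurd (L_f7 hη hp a' ha'η h2) (not_le.mpr hgt)
        · push_neg at h2
          exact ha'notin ⟨h2, le_trans h1 hcond.2⟩
    · apply anchorBelow_eq_of
      · exact (L_anchors_mu hη hij hp hq hpq).mpr ⟨anchorBelow_mem η x, hcond⟩
      · exact anchorBelow_le_self η x
      · intro a' ha' hax
        exact le_anchorBelow η ((L_anchors_mu hη hij hp hq hpq).mp ha').1 hax
-- Stage 6a: etaOf computations, H-function, generator lemmas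
variable {n : ℕ} [NeZero n] {η : Setoid (Fin n)} {i j p q : Fin n}

lemma L_minCl_etaOf {i j : Fin n} (hij : i < j) (x : Fin n) :
    minCl (etaOf i j) x = if x = j then i else x := by
  split_ifs with hx
  · subst hx
    apply le_antisymm
    · exact minCl_le _ (etaOf_r.mpr (Or.inr (Or.inr ⟨rfl, rfl⟩)))
    · apply Finset.le_min'
      intro y hy
      rcases etaOf_r.mp (Finset.mem_filter.mp hy).2 with h | ⟨h1, h2⟩ | ⟨h1, h2⟩
      · exact h ▸ hij.le
      · exact absurd h1.symm (ne_of_lt hij)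
      · exact le_of_eq h2.symm
  · apply le_antisymm
    · exact minCl_le_self _ x
    · apply Finset.le_min'
      intro y hy
      rcases etaOf_r.mp (Finset.mem_filter.mp hy).2 with h | ⟨h1, h2⟩ | ⟨h1, h2⟩
      · exact le_of_eq h
      · rw [h1, h2]; exact hij.le
      · exact absurd h1 hx

lemma L_etaOf_pair {i j y b₁ b₂ : Fin n} (hij : i < j) (h1 : (etaOf i j).r y b₁)
    (h2 : (etaOf i j).r y b₂) (hne : b₁ ≠ b₂) :
    (b₁ = i ∧ b₂ = j) ∨ (b₁ = j ∧ b₂ = i) := by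
  have hne' : i ≠ j := ne_of_lt hij
  rcases etaOf_r.mp h1 with g | ⟨g1, g2⟩ | ⟨g1, g2⟩ <;>
    rcases etaOf_r.mp h2 with f | ⟨f1, f2⟩ | ⟨f1, f2⟩ <;>
      simp_all <;> tauto

lemma L_i_anchor_etaOf {i j : Fin n} (hij : i < j) : i ∈ anchorsF (etaOf i j) := by
  rw [mem_anchorsF]
  constructor
  · rintro y ⟨b₁, hb₁, b₂, hb₂, hlt, hcons, hall⟩
    rcases L_etaOf_pair hij hb₁ hb₂ (ne_of_lt hlt) with ⟨e1, e2⟩ | ⟨e1, e2⟩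
    · have := (hall i ((etaOf i j).iseqv.refl i)).1
      rw [e1] at this
      exact absurd this (lt_irrefl i)
    · rw [e1, e2] at hlt
      exact absurd (lt_trans hij hlt) (lt_irrefl i)
  · rw [L_minCl_etaOf hij, if_neg (ne_of_lt hij)]

lemma L_out_anchor_etaOf {i j x : Fin n} (hij : i < j) (hx : ¬(i < x ∧ x ≤ j)) :
    x ∈ anchorsF (etaOf i j) := by
  have hxj : x ≠ j := fun h => hx ⟨h ▸ hij, h ▸ le_rfl⟩
  rw [mem_anchorsF]
  constructor
  · rintro y ⟨b₁, hb₁, b₂, hb₂, hlt, hcons, hall⟩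
    rcases L_etaOf_pair hij hb₁ hb₂ (ne_of_lt hlt) with ⟨e1, e2⟩ | ⟨e1, e2⟩
    · have := hall x ((etaOf i j).iseqv.refl x)
      rw [e1, e2] at this
      exact hx ⟨this.1, this.2.le⟩
    · rw [e1, e2] at hlt
      exact absurd (lt_trans hij hlt) (lt_irrefl i)
  · rw [L_minCl_etaOf hij, if_neg hxj]

lemma L_mid_not_anchor_etaOf {i j x : Fin n} (hij : i < j) (h1 : i < x) (h2 : x < j) :
    x ∉ anchorsF (etaOf i j) := by
  intro hmem
  have hu := ((mem_anchorsF _).mp hmem).1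
  apply hu i
  refine ⟨i, (etaOf i j).iseqv.refl i, j, etaOf_r.mpr (Or.inr (Or.inl ⟨rfl, rfl⟩)), hij, ?_, ?_⟩
  · intro b hb
    rcases etaOf_r.mp hb with g | ⟨g1, g2⟩ | ⟨g1, g2⟩
    · rintro ⟨u, _⟩; rw [← g] at u; exact absurd u (lt_irrefl i)
    · rintro ⟨_, v⟩; rw [g2] at v; exact absurd v (lt_irrefl j)
    · exact absurd g1 (ne_of_lt hij)
  · intro a ha
    rcases etaOf_r.mp ha with g | ⟨g1, g2⟩ | ⟨g1, g2⟩
    · rw [← g]; exact ⟨h1, h2⟩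
    · exact absurd g1 (ne_of_gt h1)
    · exact absurd g1 (ne_of_lt h2)

lemma L_anchorBelow_etaOf {i j : Fin n} (hij : i < j) (x : Fin n) :
    anchorBelow (etaOf i j) x = if i < x ∧ x ≤ j then i else x := by
  split_ifs with hc
  · apply anchorBelow_eq_of
    · exact L_i_anchor_etaOf hij
    · exact hc.1.le
    · intro a' ha' hax
      by_contra hgt
      push_neg at hgt
      have haj : a' ≤ j := le_trans hax hc.2
      rcases lt_or_eq_of_le haj with hlt | heq
      · exact L_mid_not_anchor_etaOf hij hgt hlt ha'
      · have hmin : minCl (etaOf i j) j = i := by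
          rw [L_minCl_etaOf hij]; simp
        have hthis := ((mem_anchorsF _).mp ha').2
        rw [heq, hmin] at hthis
        exact absurd hthis (ne_of_lt hij)
  · apply anchorBelow_eq_of
    · exact L_out_anchor_etaOf hij hc
    · exact le_rfl
    · intro a' _ hax; exact hax

/-- The middle-row labelling function. -/
noncomputable def HmF (η : Setoid (Fin n)) (i q z : Fin n) : Fin n :=
  if anchorBelow η z = anchorBelow η i ∨ anchorBelow η z = q then anchorBelow η i
  else anchorBelow η z

/-- The labelling of the three-row graph. -/
noncomputable def HF (η : Setoid (Fin n)) (i p q : Fin n) : W3 n → Fin n :=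
  Sum.elim (fun x => anchorBelow (η ⊔ etaOf p q) x)
    (Sum.elim (fun z => HmF η i q z) fun x => minCl (η ⊔ etaOf p q) x)

lemma L_m4 (hη : IsPlanarEq η) (hij : i < j) (hp : p = maxCl η (anchorBelow η i))
    (hq : q = anchorBelow η j) {x : Fin n} (h1 : i ≤ x) (h2 : x ≤ j) :
    anchorBelow (η ⊔ etaOf p q) x = anchorBelow η i := by
  rw [L_anchorBelow_mu hη hij hp hq x]
  split_ifs with hc
  · rfl
  · have hax1 : anchorBelow η i ≤ anchorBelow η x := anchorBelow_mono η h1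
    have hax2 : anchorBelow η x ≤ q := hq ▸ anchorBelow_mono η h2
    have hxp : anchorBelow η x ≤ p := by
      by_contra hh
      push_neg at hh
      exact hc ⟨hh, hax2⟩
    exact le_antisymm (L_f7 hη hp _ (anchorBelow_mem η x) hxp) hax1

lemma L_HmubM (hη : IsPlanarEq η) (hij : i < j) (hp : p = maxCl η (anchorBelow η i))
    (hq : q = anchorBelow η j) {x : Fin n}
    (h : anchorBelow η x = anchorBelow η i ∨ anchorBelow η x = q) :
    anchorBelow (η ⊔ etaOf p q) x = anchorBelow η i := by
  rw [L_anchorBelow_mu hη hij hp hq x]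
  split_ifs with hc
  · rfl
  · rcases h with h | h
    · exact h
    · by_cases hpq : η.r p q
      · rw [h, ← (L_rel_pq_iff hη hp hq).mp hpq]
      · exact absurd ⟨h ▸ L_p_lt_q hη hij hp hq hpq, h.le.trans le_rfl⟩ hc

lemma L_Aout (hη : IsPlanarEq η) (hij : i < j) (hp : p = maxCl η (anchorBelow η i))
    (hq : q = anchorBelow η j) {x : Fin n} (hx : x < i ∨ j < x)
    (h : ¬(anchorBelow η x = anchorBelow η i ∨ anchorBelow η x = q)) :
    anchorBelow (η ⊔ etaOf p q) x = anchorBelow η x := by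
  push_neg at h
  rw [L_anchorBelow_mu hη hij hp hq x, if_neg]
  rintro ⟨h1, h2⟩
  rcases hx with hx | hx
  · have : anchorBelow η x ≤ anchorBelow η i := anchorBelow_mono η hx.le
    have hip : anchorBelow η i ≤ p := le_trans (anchorBelow_le_self η i) (L_i_le_p hη hp)
    omega
  · have : q ≤ anchorBelow η x := hq ▸ anchorBelow_mono η hx.le
    exact h.2 (le_antisymm h2 this)

lemma L_G1 (hη : IsPlanarEq η) (hij : i < j) (hp : p = maxCl η (anchorBelow η i))
    (hq : q = anchorBelow η j) {x y : Fin n}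
    (h : (if i < x ∧ x ≤ j then i else x) = (if i < y ∧ y ≤ j then i else y)) :
    anchorBelow (η ⊔ etaOf p q) x = anchorBelow (η ⊔ etaOf p q) y := by
  split_ifs at h with hcx hcy hcy
  · rw [L_m4 hη hij hp hq hcx.1.le hcx.2, L_m4 hη hij hp hq hcy.1.le hcy.2]
  · rw [← h]
    rw [L_m4 hη hij hp hq hcx.1.le hcx.2, L_m4 hη hij hp hq le_rfl hij.le]
  · rw [h]
    rw [L_m4 hη hij hp hq hcy.1.le hcy.2, L_m4 hη hij hp hq le_rfl hij.le]
  · rw [h]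

lemma L_G2 (hη : IsPlanarEq η) (hij : i < j) (hp : p = maxCl η (anchorBelow η i))
    (hq : q = anchorBelow η j) {x y : Fin n}
    (h : (if i < x ∧ x ≤ j then i else x) = (if y = j then i else y)) :
    anchorBelow (η ⊔ etaOf p q) x = HmF η i q y := by
  have hHmj : HmF η i q j = anchorBelow η i := by
    unfold HmF
    rw [if_pos (Or.inr hq.symm)]
  have hHmi : HmF η i q i = anchorBelow η i := by
    unfold HmF
    rw [if_pos (Or.inl rfl)]
  split_ifs at h with hcx hcy hcy
  · -- x in (i,j], y = j
    rw [hcy, hHmj, L_m4 hη hij hp hq hcx.1.le hcx.2]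
  · -- x in (i,j], y ≠ j, i = y
    rw [← h, hHmi, L_m4 hη hij hp hq hcx.1.le hcx.2]
  · -- x out, y = j, x = i
    rw [hcy, hHmj, h, L_m4 hη hij hp hq le_rfl hij.le]
  · -- x out, y ≠ j, x = y
    subst h
    by_cases hlab : anchorBelow η x = anchorBelow η i ∨ anchorBelow η x = q
    · rw [L_HmubM hη hij hp hq hlab]
      unfold HmF
      rw [if_pos hlab]
    · have hout : x < i ∨ j < x := by
        by_cases hxi : x ≤ i
        · rcases lt_or_eq_of_le hxi with hh | hh
          · exact Or.inl hh
          · exact absurd (Or.inl (hh ▸ rfl)) hlab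
        · push_neg at hxi
          right
          rcases lt_trichotomy x j with hh | hh | hh
          · exact absurd ⟨hxi, hh.le⟩ hcx
          · exact absurd hh hcy
          · exact hh
      rw [L_Aout hη hij hp hq hout hlab]
      unfold HmF
      rw [if_neg hlab]

lemma L_G3 (hη : IsPlanarEq η) (hij : i < j) (hp : p = maxCl η (anchorBelow η i))
    (hq : q = anchorBelow η j) {x y : Fin n}
    (h : (if x = j then i else x) = (if y = j then i else y)) :
    HmF η i q x = HmF η i q y := by
  have hHmj : HmF η i q j = anchorBelow η i := by
    unfold HmF; rw [if_pos (Or.inr hq.symm)]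
  have hHmi : HmF η i q i = anchorBelow η i := by
    unfold HmF; rw [if_pos (Or.inl rfl)]
  split_ifs at h with hcx hcy hcy
  · rw [hcx, hcy]
  · rw [hcx, ← h, hHmj, hHmi]
  · rw [hcy, h, hHmj, hHmi]
  · rw [h]

lemma L_G4 {x y : Fin n} (h : anchorBelow η x = anchorBelow η y) :
    HmF η i q x = HmF η i q y := by
  unfold HmF; rw [h]

lemma L_G5 (hη : IsPlanarEq η) (hij : i < j) (hp : p = maxCl η (anchorBelow η i))
    (hq : q = anchorBelow η j) {x y : Fin n}
    (h : anchorBelow η x = minCl η y) :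
    HmF η i q x = minCl (η ⊔ etaOf p q) y := by
  rw [L_minCl_mu hη hij hp hq y]
  split_ifs with hc
  · rcases hc with hc | hc
    · have : minCl η y = anchorBelow η i := by
        rw [minCl_congr η hc, L_minp hη hp]
      unfold HmF
      rw [if_pos (Or.inl (h.trans this))]
    · have : minCl η y = q := by
        rw [minCl_congr η hc, L_minq hq]
      unfold HmF
      rw [if_pos (Or.inr (h.trans this))]
  · push_neg at hc
    unfold HmF
    rw [if_neg, h]
    rintro (hl | hl)
    · -- anchorBelow η x = ai, so minCl η y = ai, so η.r y p
      apply hc.1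
      have h1 : η.r y (anchorBelow η i) := by
        have := rel_minCl η y
        rwa [← h, hl] at this
      exact η.iseqv.trans h1 (L_rel_aip hp)
    · apply hc.2
      have h1 : η.r y q := by
        have := rel_minCl η y
        rwa [← h, hl] at this
      exact h1

lemma L_G6 (hη : IsPlanarEq η) (hij : i < j) (hp : p = maxCl η (anchorBelow η i))
    (hq : q = anchorBelow η j) {x y : Fin n}
    (h : minCl η x = minCl η y) :
    minCl (η ⊔ etaOf p q) x = minCl (η ⊔ etaOf p q) y := by
  have hxy : η.r x y := by
    have h1 := rel_minCl η x
    have h2 := rel_minCl η y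
    rw [h] at h1
    exact η.iseqv.trans h1 (η.iseqv.symm h2)
  rw [L_minCl_mu hη hij hp hq x, L_minCl_mu hη hij hp hq y]
  by_cases hc : η.r y p ∨ η.r y q
  · have hc' : η.r x p ∨ η.r x q := by
      rcases hc with hc | hc
      · exact Or.inl (η.iseqv.trans hxy hc)
      · exact Or.inr (η.iseqv.trans hxy hc)
    rw [if_pos hc, if_pos hc']
  · have hc' : ¬(η.r x p ∨ η.r x q) := by
      rintro (hh | hh)
      · exact hc (Or.inl (η.iseqv.trans (η.iseqv.symm hxy) hh))
      · exact hc (Or.inr (η.iseqv.trans (η.iseqv.symm hxy) hh))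
    rw [if_neg hc, if_neg hc', h]
-- Stage 6b: connectivity and the product formula
variable {n : ℕ} [NeZero n] {η : Setoid (Fin n)} {i j p q : Fin n}

lemma L_edgeA {u v : V n} (h : (hbar i j).r u v) :
    Relation.EqvGen (joinRel (hbar i j) (dEta η)) (upMid u) (upMid v) :=
  Relation.EqvGen.rel _ _ (Or.inl ⟨u, v, h, rfl, rfl⟩)

lemma L_edgeB {u v : V n} (h : (dEta η).r u v) :
    Relation.EqvGen (joinRel (hbar i j) (dEta η)) (midLow u) (midLow v) :=
  Relation.EqvGen.rel _ _ (Or.inr ⟨u, v, h, rfl, rfl⟩)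

lemma L_gen (hη : IsPlanarEq η) (hij : i < j) (hp : p = maxCl η (anchorBelow η i))
    (hq : q = anchorBelow η j) :
    ∀ u v, joinRel (hbar i j) (dEta η) u v → HF η i p q u = HF η i p q v := by
  rintro u v (⟨a, b, hab, rfl, rfl⟩ | ⟨a, b, hab, rfl, rfl⟩)
  · rcases a with x | x <;> rcases b with y | y
    · have h : anchorBelow (etaOf i j) x = anchorBelow (etaOf i j) y := hab
      rw [L_anchorBelow_etaOf hij, L_anchorBelow_etaOf hij] at h
      exact L_G1 hη hij hp hq h
    · have h : anchorBelow (etaOf i j) x = minCl (etaOf i j) y := hab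
      rw [L_anchorBelow_etaOf hij, L_minCl_etaOf hij] at h
      exact L_G2 hη hij hp hq h
    · have h : minCl (etaOf i j) x = anchorBelow (etaOf i j) y := hab
      rw [L_anchorBelow_etaOf hij, L_minCl_etaOf hij] at h
      exact (L_G2 hη hij hp hq h.symm).symm
    · have h : minCl (etaOf i j) x = minCl (etaOf i j) y := hab
      rw [L_minCl_etaOf hij, L_minCl_etaOf hij] at h
      exact L_G3 hη hij hp hq h
  · rcases a with x | x <;> rcases b with y | y
    · exact L_G4 hab
    · have h : anchorBelow η x = minCl η y := hab
      exact L_G5 hη hij hp hq h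
    · have h : minCl η x = anchorBelow η y := hab
      exact (L_G5 hη hij hp hq h.symm).symm
    · exact L_G6 hη hij hp hq hab

lemma L_C_mid (hη : IsPlanarEq η) (hij : i < j) (hp : p = maxCl η (anchorBelow η i))
    (hq : q = anchorBelow η j) (x : Fin n) :
    Relation.EqvGen (joinRel (hbar i j) (dEta η)) (Sum.inr (Sum.inl x))
      (Sum.inr (Sum.inl (HmF η i q x))) := by
  have e1 : Relation.EqvGen (joinRel (hbar i j) (dEta η)) (Sum.inr (Sum.inl x))
      (Sum.inr (Sum.inl (anchorBelow η x))) := by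
    apply L_edgeB (u := Sum.inl x) (v := Sum.inl (anchorBelow η x))
    show anchorBelow η x = anchorBelow η (anchorBelow η x)
    rw [anchorBelow_anchor η (anchorBelow_mem η x)]
  unfold HmF
  split_ifs with hc
  · rcases hc with hc | hc
    · rwa [hc] at e1
    · rw [hc] at e1
      have e2 : Relation.EqvGen (joinRel (hbar i j) (dEta η)) (Sum.inr (Sum.inl q))
          (Sum.inr (Sum.inl j)) := by
        apply L_edgeB (u := Sum.inl q) (v := Sum.inl j)
        show anchorBelow η q = anchorBelow η j
        rw [hq, anchorBelow_anchor η (anchorBelow_mem η j)]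
      have e3 : Relation.EqvGen (joinRel (hbar i j) (dEta η)) (Sum.inr (Sum.inl j))
          (Sum.inr (Sum.inl i)) := by
        apply L_edgeA (u := Sum.inr j) (v := Sum.inr i)
        show minCl (etaOf i j) j = minCl (etaOf i j) i
        rw [L_minCl_etaOf hij, L_minCl_etaOf hij, if_pos rfl, if_neg (ne_of_lt hij)]
      have e4 : Relation.EqvGen (joinRel (hbar i j) (dEta η)) (Sum.inr (Sum.inl i))
          (Sum.inr (Sum.inl (anchorBelow η i))) := by
        apply L_edgeB (u := Sum.inl i) (v := Sum.inl (anchorBelow η i))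
        show anchorBelow η i = anchorBelow η (anchorBelow η i)
        rw [anchorBelow_anchor η (anchorBelow_mem η i)]
      exact (e1.trans _ _ _ e2).trans _ _ _ (e3.trans _ _ _ e4)
  · exact e1

lemma L_C_up (hη : IsPlanarEq η) (hij : i < j) (hp : p = maxCl η (anchorBelow η i))
    (hq : q = anchorBelow η j) (x : Fin n) :
    ∃ z, Relation.EqvGen (joinRel (hbar i j) (dEta η)) (Sum.inl x) (Sum.inr (Sum.inl z)) ∧
      HmF η i q z = anchorBelow (η ⊔ etaOf p q) x := by
  by_cases hx : i ≤ x ∧ x ≤ j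
  · refine ⟨j, ?_, ?_⟩
    · apply L_edgeA (u := Sum.inl x) (v := Sum.inr j)
      show anchorBelow (etaOf i j) x = minCl (etaOf i j) j
      rw [L_anchorBelow_etaOf hij, L_minCl_etaOf hij, if_pos rfl]
      split_ifs with hcc
      · rfl
      · have : x ≤ i := by
          by_contra hh
          push_neg at hh
          exact hcc ⟨hh, hx.2⟩
        exact le_antisymm this hx.1
    · rw [L_m4 hη hij hp hq hx.1 hx.2]
      unfold HmF
      rw [if_pos (Or.inr hq.symm)]
  · have hout : x < i ∨ j < x := by
      rcases not_and_or.mp hx with h | h <;> push_neg at h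
      · exact Or.inl h
      · exact Or.inr h
    refine ⟨x, ?_, ?_⟩
    · apply L_edgeA (u := Sum.inl x) (v := Sum.inr x)
      show anchorBelow (etaOf i j) x = minCl (etaOf i j) x
      have hxj : x ≠ j := by
        rintro rfl
        rcases hout with h | h
        · exact absurd hij (not_lt.mpr h.le)
        · exact absurd h (lt_irrefl x)
      have hnc : ¬(i < x ∧ x ≤ j) := by
        rintro ⟨h1, h2⟩
        rcases hout with h | h
        · exact absurd (lt_trans h h1) (lt_irrefl x)
        · exact absurd (lt_of_le_of_lt h2 h) (lt_irrefl x)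
      rw [L_anchorBelow_etaOf hij, L_minCl_etaOf hij, if_neg hnc, if_neg hxj]
    · by_cases hlab : anchorBelow η x = anchorBelow η i ∨ anchorBelow η x = q
      · rw [L_HmubM hη hij hp hq hlab]
        unfold HmF
        rw [if_pos hlab]
      · rw [L_Aout hη hij hp hq hout hlab]
        unfold HmF
        rw [if_neg hlab]

lemma L_C_low (hη : IsPlanarEq η) (hij : i < j) (hp : p = maxCl η (anchorBelow η i))
    (hq : q = anchorBelow η j) {x : Fin n} (hx : Unnested η x) :
    Relation.EqvGen (joinRel (hbar i j) (dEta η)) (Sum.inr (Sum.inr x))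
        (Sum.inr (Sum.inl (minCl η x))) ∧
      HmF η i q (minCl η x) = minCl (η ⊔ etaOf p q) x := by
  constructor
  · have := L_edgeB (i := i) (j := j) (u := Sum.inr x) (v := Sum.inl (minCl η x))
      (show minCl η x = anchorBelow η (minCl η x) by
        rw [anchorBelow_anchor η (minCl_mem_anchorsF hx)])
    exact this
  · rw [L_minCl_mu hη hij hp hq x]
    have hAm : anchorBelow η (minCl η x) = minCl η x :=
      anchorBelow_anchor η (minCl_mem_anchorsF hx)
    split_ifs with hc
    · unfold HmF
      rcases hc with hc | hc
      · have : minCl η x = anchorBelow η i := by rw [minCl_congr η hc, L_minp hη hp]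
        rw [if_pos (Or.inl (hAm.trans this))]
      · have : minCl η x = q := by rw [minCl_congr η hc, L_minq hq]
        rw [if_pos (Or.inr (hAm.trans this))]
    · push_neg at hc
      unfold HmF
      rw [if_neg, hAm]
      rw [hAm]
      rintro (hl | hl)
      · apply hc.1
        have h1 : η.r x (anchorBelow η i) := hl ▸ rel_minCl η x
        exact η.iseqv.trans h1 (L_rel_aip hp)
      · exact hc.2 (hl ▸ rel_minCl η x)

lemma L_low_H (hη : IsPlanarEq η) (hij : i < j) (hp : p = maxCl η (anchorBelow η i))
    (hq : q = anchorBelow η j) {x : Fin n} (hx : ¬ Unnested η x) :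
    minCl (η ⊔ etaOf p q) x = minCl η x := by
  rw [L_minCl_mu hη hij hp hq x, if_neg]
  rintro (h | h)
  · exact hx ((unnested_congr η h).mpr (L_unn_p hp))
  · exact hx ((unnested_congr η h).mpr (L_unn_q hq))

lemma L_minCl_not_anchor {x : Fin n} (hx : ¬ Unnested η x) : minCl η x ∉ anchorsF η :=
  fun h => hx ((unnested_congr η (rel_minCl η x)).mpr ((mem_anchorsF η).mp h).1)

lemma L_HmF_anchor (z : Fin n) : HmF η i q z ∈ anchorsF η := by
  unfold HmF
  split_ifs
  · exact anchorBelow_mem η i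
  · exact anchorBelow_mem η z

lemma L_ker_eq (hη : IsPlanarEq η) (hij : i < j) (hp : p = maxCl η (anchorBelow η i))
    (hq : q = anchorBelow η j) :
    Relation.EqvGen.setoid (joinRel (hbar i j) (dEta η)) = Setoid.ker (HF η i p q) := by
  apply Setoid.ext
  intro u v
  constructor
  · intro h
    induction h with
    | rel a b hab => exact L_gen hη hij hp hq a b hab
    | refl a => rfl
    | symm a b _ ih => exact ih.symm
    | trans a b c _ _ ih1 ih2 => exact ih1.trans ih2
  · intro h
    have h' : HF η i p q u = HF η i p q v := h
    have toMid : ∀ w : W3 n,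
        (∃ z, Relation.EqvGen (joinRel (hbar i j) (dEta η)) w (Sum.inr (Sum.inl z)) ∧
          HmF η i q z = HF η i p q w) ∨
        (∃ x, w = Sum.inr (Sum.inr x) ∧ ¬ Unnested η x) := by
      rintro (x | (x | x))
      · left
        obtain ⟨z, hz1, hz2⟩ := L_C_up hη hij hp hq x
        exact ⟨z, hz1, hz2⟩
      · left
        exact ⟨x, Relation.EqvGen.refl _, rfl⟩
      · by_cases hx : Unnested η x
        · left
          obtain ⟨hz1, hz2⟩ := L_C_low hη hij hp hq hx
          exact ⟨minCl η x, hz1, hz2⟩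
        · right
          exact ⟨x, rfl, hx⟩
    rcases toMid u with ⟨z, ez, hz⟩ | ⟨x, rfl, hx⟩ <;>
      rcases toMid v with ⟨w, ew, hw⟩ | ⟨y, rfl, hy⟩
    · have hzw : HmF η i q z = HmF η i q w := by rw [hz, hw, h']
      have e1 := L_C_mid hη hij hp hq z
      rw [hzw] at e1
      have e2 := L_C_mid hη hij hp hq w
      exact (ez.trans _ _ _ (e1.trans _ _ _ (e2.symm _ _))).trans _ _ _ (ew.symm _ _)
    · exfalso
      have hv : HF η i p q (Sum.inr (Sum.inr y)) = minCl η y := by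
        show minCl (η ⊔ etaOf p q) y = minCl η y
        exact L_low_H hη hij hp hq hy
      have : HmF η i q z = minCl η y := by rw [hz, h', hv]
      exact L_minCl_not_anchor hy (this ▸ L_HmF_anchor z)
    · exfalso
      have hu : HF η i p q (Sum.inr (Sum.inr x)) = minCl η x := by
        show minCl (η ⊔ etaOf p q) x = minCl η x
        exact L_low_H hη hij hp hq hx
      have : HmF η i q w = minCl η x := by rw [hw, ← h', hu]
      exact L_minCl_not_anchor hx (this ▸ L_HmF_anchor w)
    · have hu : HF η i p q (Sum.inr (Sum.inr x)) = minCl η x := by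
        show minCl (η ⊔ etaOf p q) x = minCl η x
        exact L_low_H hη hij hp hq hx
      have hv : HF η i p q (Sum.inr (Sum.inr y)) = minCl η y := by
        show minCl (η ⊔ etaOf p q) y = minCl η y
        exact L_low_H hη hij hp hq hy
      have hxy : minCl η x = minCl η y := by rw [← hu, h', hv]
      exact L_edgeB (u := Sum.inr x) (v := Sum.inr y) hxy

lemma L_pmul (hη : IsPlanarEq η) (hij : i < j) (hp : p = maxCl η (anchorBelow η i))
    (hq : q = anchorBelow η j) :
    pmul (hbar i j) (dEta η) = dEta (η ⊔ etaOf p q) := by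
  unfold pmul
  rw [L_ker_eq hη hij hp hq]
  apply Setoid.ext
  intro u v
  have hcomp : ∀ w : V n, HF η i p q (outer w) = dMap (η ⊔ etaOf p q) w := by
    rintro (x | x) <;> rfl
  show HF η i p q (outer u) = HF η i p q (outer v) ↔ _
  rw [hcomp, hcomp]
  exact Iff.rfl
-- Stage 7: successor lemmas and final assembly
variable {n : ℕ} [NeZero n] {η : Setoid (Fin n)} {i j p q : Fin n}

lemma L_suc_pq (hη : IsPlanarEq η) (hij : i < j) (hp : p = maxCl η (anchorBelow η i))
    (hq : q = anchorBelow η j) (hnpq : ¬ η.r p q) : sucS (η ⊔ etaOf p q) p = q := by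
  have hplq := L_p_lt_q hη hij hp hq hnpq
  have hmem : q ∈ Finset.univ.filter (fun y => (η ⊔ etaOf p q).r p y ∧ p < y) :=
    Finset.mem_filter.mpr ⟨Finset.mem_univ q, L_mu_pq, hplq⟩
  unfold sucS
  rw [dif_pos ⟨q, hmem⟩]
  apply le_antisymm
  · exact Finset.min'_le _ _ hmem
  · apply Finset.le_min'
    intro y hy
    obtain ⟨hy1, hy2⟩ := (Finset.mem_filter.mp hy).2
    rcases (L_mu_p_mem hnpq).mp hy1 with h | h
    · exact absurd hy2 (not_lt.mpr (L_cls_p_le hp h))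
    · exact L_q_le_cls hq h

lemma sucS_congr {ε ε' : Setoid (Fin n)} {x : Fin n}
    (h : ∀ y, x < y → (ε.r x y ↔ ε'.r x y)) : sucS ε x = sucS ε' x := by
  have hfil : (Finset.univ.filter fun y => ε.r x y ∧ x < y) =
      (Finset.univ.filter fun y => ε'.r x y ∧ x < y) := by
    apply Finset.filter_congr
    intro y _
    constructor
    · rintro ⟨h1, h2⟩; exact ⟨(h y h2).mp h1, h2⟩
    · rintro ⟨h1, h2⟩; exact ⟨(h y h2).mpr h1, h2⟩
  unfold sucS
  by_cases hne : (Finset.univ.filter fun y => ε'.r x y ∧ x < y).Nonempty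
  · rw [dif_pos (by rw [hfil]; exact hne), dif_pos hne]
    apply le_antisymm
    · apply Finset.min'_le
      rw [hfil]
      exact Finset.min'_mem _ hne
    · apply Finset.le_min'
      intro y hy
      rw [hfil] at hy
      exact Finset.min'_le _ _ hy
  · rw [dif_neg (by rw [hfil]; exact hne), dif_neg hne]

lemma L_suc_other (hη : IsPlanarEq η) (hij : i < j) (hp : p = maxCl η (anchorBelow η i))
    (hq : q = anchorBelow η j) (hnpq : ¬ η.r p q) {x : Fin n} (hx : x ≠ p) :
    sucS (η ⊔ etaOf p q) x = sucS η x := by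
  have hplq := L_p_lt_q hη hij hp hq hnpq
  by_cases hxp : η.r x p
  · -- x is in the class of p, x < p
    have hxlp : x < p := by
      have h1 : x ≤ maxCl η x := le_maxCl_self η x
      have h2 : maxCl η x = maxCl η p := maxCl_congr η hxp
      rw [h2, L_maxp hp] at h1
      exact lt_of_le_of_ne h1 hx
    have hmemη : p ∈ Finset.univ.filter (fun y => η.r x y ∧ x < y) :=
      Finset.mem_filter.mpr ⟨Finset.mem_univ p, hxp, hxlp⟩
    have hne1 : (Finset.univ.filter fun y => η.r x y ∧ x < y).Nonempty := ⟨p, hmemη⟩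
    have hne2 : (Finset.univ.filter fun y => (η ⊔ etaOf p q).r x y ∧ x < y).Nonempty := by
      refine ⟨p, Finset.mem_filter.mpr ⟨Finset.mem_univ p, ?_, hxlp⟩⟩
      exact sup_r.mpr (Or.inl hxp)
    unfold sucS
    rw [dif_pos hne2, dif_pos hne1]
    apply le_antisymm
    · apply Finset.min'_le
      have hm := Finset.min'_mem _ hne1
      obtain ⟨hm1, hm2⟩ := (Finset.mem_filter.mp hm).2
      exact Finset.mem_filter.mpr ⟨Finset.mem_univ _, sup_r.mpr (Or.inl hm1), hm2⟩
    · apply Finset.le_min'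
      intro y hy
      obtain ⟨hy1, hy2⟩ := (Finset.mem_filter.mp hy).2
      rcases sup_r.mp hy1 with h | ⟨h1, h2⟩ | ⟨h1, h2⟩
      · exact Finset.min'_le _ _ (Finset.mem_filter.mpr ⟨Finset.mem_univ _, h, hy2⟩)
      · have ha : (Finset.univ.filter fun y => η.r x y ∧ x < y).min' hne1 ≤ p :=
          Finset.min'_le _ _ hmemη
        have hb : q ≤ y := L_q_le_cls hq h2
        exact le_trans ha (le_trans hplq.le hb)
      · exact absurd (η.iseqv.trans (η.iseqv.symm hxp) h1) hnpq
  · by_cases hxq : η.r x q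
    · apply sucS_congr
      intro y hylt
      constructor
      · intro h
        rcases sup_r.mp h with h | ⟨h1, h2⟩ | ⟨h1, h2⟩
        · exact h
        · exact absurd (η.iseqv.trans (η.iseqv.symm h1) hxq) hnpq
        · have hyp : y ≤ p := L_cls_p_le hp h2
          have hqx : q ≤ x := L_q_le_cls hq (η.iseqv.symm hxq)
          exact absurd hylt (not_lt.mpr (le_trans hyp (le_trans hplq.le hqx)))
      · intro h; exact sup_r.mpr (Or.inl h)
    · apply sucS_congr
      intro y _
      exact L_mu_unmerged_iff hxp hxq y
/-- Lemma `lem:suc`.  Let `η` be planar and `i < j`.  With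
`p = max [i]_{ker d_η}`, `q = min [j]_{ker d_η}` and `μ = η ∨ η_{pq}`:
(1) `μ` is planar and `h̄_ij d_η = d_μ`;
(2) if `μ ≠ η` then `suc_μ(p) = q` and `suc_μ(x) = suc_η(x)` for all `x ≠ p`. -/
theorem stmt16 (n : ℕ) (hn : 2 ≤ n) [NeZero n]
    (η : Setoid (Fin n)) (hη : IsPlanarEq η) (i j : Fin n) (hij : i < j) :
    ∀ p q : Fin n, p = maxCl (kerP (dEta η)) i → q = minCl (kerP (dEta η)) j →
      (IsPlanarEq (η ⊔ etaOf p q) ∧ pmul (hbar i j) (dEta η) = dEta (η ⊔ etaOf p q)) ∧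
      ((η ⊔ etaOf p q) ≠ η →
        sucS (η ⊔ etaOf p q) p = q ∧
          ∀ x : Fin n, x ≠ p → sucS (η ⊔ etaOf p q) x = sucS η x) := by
  intro p q hp0 hq0
  have hp : p = maxCl η (anchorBelow η i) := by rw [hp0, p_eq_maxCl hη i]
  have hq : q = anchorBelow η j := by rw [hq0, q_eq_minCl hη j]
  refine ⟨⟨L_mu_planar hη hij hp hq, L_pmul hη hij hp hq⟩, ?_⟩
  intro hne
  have hnpq : ¬ η.r p q := fun h => hne (L_mu_eq_eta h)
  exact ⟨L_suc_pq hη hij hp hq hnpq, fun x hx => L_suc_other hη hij hp hq hnpq hx⟩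

end PaperFDP
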